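/- arXiv:1309.6903 — 2 statements merged into one kernel-verified Lean document; each statement's English description precedes it below -/
import Mathlib

section
/- Let (Ω, F, μ) be a σ-finite measure space, let ε, δ ∈ L⁰(μ) with ε > 0 and δ > 0 a.e., let f, g ∈ L⁰(μ), and let A ∈ F. Define B_ε(f) = { h ∈ L⁰ : |f − h| < ε a.e. }. Then 1_A·B_ε(f) + 1_{Aᶜ}·B_δ(g) = B_{1_A ε + 1_{Aᶜ} δ}(1_A f + 1_{Aᶜ} g), where 1_A·S + 1_{Aᶜ}·T denotes { 1_A s + 1_{Aᶜ} t : s ∈ S, t ∈ T }. -/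
/-!
Membership in an `L⁰`-ball is an almost-everywhere pointwise condition, so both sides split into
independent conditions on `A` and on `Aᶜ`. The only content is the converse direction: a function
lying within `ε` of `f` on `A` extends to an element of `B_ε(f)` by setting it equal to `f` off `A`,
which is admissible because `ε > 0` a.e. and measurable because `A` is.
-/

open MeasureTheory Filter

/-- The `L⁰`-ball of radius `ε` around `f` (centers and radii given as functions). -/
def L0ball {Ω : Type*} [MeasurableSpace Ω] (μ : Measure Ω) (f ε : Ω → ℝ) :
    Set (Ω →ₘ[μ] ℝ) :=
  {h | ∀ᵐ ω ∂μ, |f ω - h ω| < ε ω}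

section

variable {Ω : Type*} [MeasurableSpace Ω] {μ : Measure Ω} {A : Set Ω}

lemma ae_eq_indicator_add_compl_iff {u s t : Ω → ℝ} :
    u =ᵐ[μ] A.indicator s + Aᶜ.indicator t ↔
      (∀ᵐ ω ∂μ, ω ∈ A → s ω = u ω) ∧ ∀ᵐ ω ∂μ, ω ∈ Aᶜ → t ω = u ω := by
  rw [EventuallyEq, ← eventually_and]
  refine eventually_congr (Eventually.of_forall fun ω => ?_)
  by_cases hω : ω ∈ A <;> simp [hω, eq_comm]

lemma mem_L0ball_indicator_add_compl_iff {f g ε δ : Ω → ℝ} {u : Ω →ₘ[μ] ℝ} :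
    u ∈ L0ball μ (A.indicator f + Aᶜ.indicator g) (A.indicator ε + Aᶜ.indicator δ) ↔
      (∀ᵐ ω ∂μ, ω ∈ A → |f ω - u ω| < ε ω) ∧ ∀ᵐ ω ∂μ, ω ∈ Aᶜ → |g ω - u ω| < δ ω := by
  rw [L0ball, Set.mem_ofPred_eq, ← eventually_and]
  refine eventually_congr (Eventually.of_forall fun ω => ?_)
  by_cases hω : ω ∈ A <;> simp [hω]

lemma exists_mem_L0ball_eq_on_iff (hA : MeasurableSet A) {f u : Ω →ₘ[μ] ℝ} {ε : Ω → ℝ}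
    (hε : ∀ᵐ ω ∂μ, 0 < ε ω) :
    (∃ s ∈ L0ball μ f ε, ∀ᵐ ω ∂μ, ω ∈ A → s ω = u ω) ↔
      ∀ᵐ ω ∂μ, ω ∈ A → |f ω - u ω| < ε ω := by
  classical
  constructor
  · rintro ⟨s, hs, hsu⟩
    filter_upwards [hs, hsu] with ω hs hsu hω
    rwa [← hsu hω]
  · intro hu
    have hm : AEStronglyMeasurable (A.piecewise u f) μ :=
      u.aestronglyMeasurable.restrict.piecewise hA f.aestronglyMeasurable.restrict
    refine ⟨AEEqFun.mk _ hm, ?_, ?_⟩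
    · filter_upwards [hu, hε, AEEqFun.coeFn_mk _ hm] with ω hu hε hs
      by_cases hω : ω ∈ A <;> simp [hs, hω, hu, hε]
    · filter_upwards [AEEqFun.coeFn_mk _ hm] with ω hs hω
      simp [hs, hω]

end

theorem L0ball_piecewise_general {Ω : Type*} [MeasurableSpace Ω] {μ : Measure Ω}
    (f g ε δ : Ω →ₘ[μ] ℝ) (hε : ∀ᵐ ω ∂μ, 0 < ε ω) (hδ : ∀ᵐ ω ∂μ, 0 < δ ω)
    (A : Set Ω) (hA : MeasurableSet A) :
    {u : Ω →ₘ[μ] ℝ | ∃ s ∈ L0ball μ f ε, ∃ t ∈ L0ball μ g δ,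
        (u : Ω → ℝ) =ᵐ[μ] A.indicator s + Aᶜ.indicator t}
      = L0ball μ (A.indicator f + Aᶜ.indicator g) (A.indicator ε + Aᶜ.indicator δ) := by
  ext u
  rw [Set.mem_ofPred_eq, mem_L0ball_indicator_add_compl_iff,
    ← exists_mem_L0ball_eq_on_iff hA hε, ← exists_mem_L0ball_eq_on_iff hA.compl hδ]
  simp only [ae_eq_indicator_add_compl_iff]
  constructor
  · rintro ⟨s, hs, t, ht, hsu, htu⟩
    exact ⟨⟨s, hs, hsu⟩, t, ht, htu⟩
  · rintro ⟨⟨s, hs, hsu⟩, t, ht, htu⟩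
    exact ⟨s, hs, t, ht, hsu, htu⟩

/-- Stability of `L⁰`-balls under pasting along a measurable set:
`1_A·B_ε(f) + 1_{Aᶜ}·B_δ(g) = B_{1_A ε + 1_{Aᶜ} δ}(1_A f + 1_{Aᶜ} g)`. -/
theorem L0ball_piecewise {Ω : Type*} [MeasurableSpace Ω] {μ : Measure Ω} [SigmaFinite μ]
    (f g ε δ : Ω →ₘ[μ] ℝ) (hε : ∀ᵐ ω ∂μ, 0 < ε ω) (hδ : ∀ᵐ ω ∂μ, 0 < δ ω)
    (A : Set Ω) (hA : MeasurableSet A) :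
    {u : Ω →ₘ[μ] ℝ | ∃ s ∈ L0ball μ f ε, ∃ t ∈ L0ball μ g δ,
        (u : Ω → ℝ) =ᵐ[μ] A.indicator s + Aᶜ.indicator t}
      = L0ball μ (A.indicator f + Aᶜ.indicator g) (A.indicator ε + Aᶜ.indicator δ) :=
  L0ball_piecewise_general f g ε δ hε hδ A hA
end

section
/- Let (Ω, F, μ) be a σ-finite measure space and let S ⊆ L⁰(μ) be nonempty and bounded above, i.e., there is g ∈ L⁰(μ) with f ≤ g a.e. for all f ∈ S. Then S has a least upper bound in L⁰(μ) with respect to the a.e. pointwise order (an essential supremum): there exists s ∈ L⁰(μ) such that f ≤ s a.e. for all f ∈ S, and whenever f ≤ t a.e. for all f ∈ S, then s ≤ t a.e. -/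
/-!
Fix a finite measure `ν` with the same null sets as `μ` and put `J f = ∫ arctan ∘ f dν`, a
bounded, strictly monotone functional on `L⁰(μ)` that is continuous along a.e. convergent
sequences. Let `M` be the supremum of `J` over the finite suprema of `S`. An increasing
maximising sequence `H n` has a pointwise supremum `s` with `J s ≥ M`. For `f ∈ S` the supremum
`s'` of `f ⊔ H n` satisfies `s ≤ s'` and `J s' ≤ M`, so strict monotonicity forces `s' = s`,
whence `f ≤ s`.
-/

open MeasureTheory Filter Set Topology Real

theorem exists_isLUB_of_strictMono_of_tendsto {α : Type*} [Lattice α] {J : α → ℝ}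
    (hJ : StrictMono J)
    (hseq : ∀ H : ℕ → α, Monotone H → BddAbove (range H) →
      ∃ s, IsLUB (range H) s ∧ Tendsto (J ∘ H) atTop (𝓝 (J s)))
    {S : Set α} (hne : S.Nonempty) (hbdd : BddAbove S) : ∃ s, IsLUB S s := by
  set T := supClosure S
  have hbddT : BddAbove T := by rwa [BddAbove, upperBounds_supClosure]
  have hbddJ : BddAbove (J '' T) := hJ.monotone.map_bddAbove hbddT
  obtain ⟨u, -, hu_tendsto, hu_mem⟩ :=
    exists_seq_tendsto_sSup ((hne.mono subset_supClosure).image J) hbddJ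
  choose F hFT hFJ using hu_mem
  set H := partialSups F
  have hHT : ∀ n, H n ∈ T := fun n => by
    rw [partialSups_apply]
    exact supClosed_supClosure.finsetSup'_mem _ fun i _ => hFT i
  have hJH_le : ∀ n, J (H n) ≤ sSup (J '' T) := fun n => le_csSup hbddJ ⟨H n, hHT n, rfl⟩
  have hJH : Tendsto (fun n => J (H n)) atTop (𝓝 (sSup (J '' T))) :=
    tendsto_of_tendsto_of_tendsto_of_le_of_le hu_tendsto tendsto_const_nhds
      (fun n => hFJ n ▸ hJ.monotone (le_partialSups F n)) hJH_le
  have hHbdd : BddAbove (range H) := hbddT.mono (range_subset_iff.2 hHT)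
  obtain ⟨s, hs, -⟩ := hseq H H.monotone hHbdd
  refine ⟨s, fun f hf => ?_, fun t ht => hs.2 ?_⟩
  · have hH'mono : Monotone fun n => f ⊔ H n := fun _ _ hmn => sup_le_sup_left (H.monotone hmn) f
    have hH'T : ∀ n, f ⊔ H n ∈ T := fun n =>
      supClosed_supClosure (subset_supClosure hf) (hHT n)
    obtain ⟨s', hs', hJs'⟩ :=
      hseq _ hH'mono (hbddT.mono (range_subset_iff.2 hH'T))
    have hJs'_le : J s' ≤ J s := calc
      J s' ≤ sSup (J '' T) := le_of_tendsto' hJs' fun n => le_csSup hbddJ ⟨_, hH'T n, rfl⟩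
      _ ≤ J s := le_of_tendsto' hJH fun n => hJ.monotone (hs.1 ⟨n, rfl⟩)
    have hss' : s ≤ s' := hs.2 <| by
      rintro _ ⟨n, rfl⟩
      exact le_sup_right.trans (hs'.1 ⟨n, rfl⟩)
    have hs's : s = s' := eq_of_le_of_not_lt hss' fun h => (hJ h).not_ge hJs'_le
    calc f ≤ f ⊔ H 0 := le_sup_left
      _ ≤ s := hs's ▸ hs'.1 ⟨0, rfl⟩
  · rintro _ ⟨n, rfl⟩
    exact (upperBounds_supClosure S ▸ ht) (hHT n)

theorem Real.abs_arctan_le (x : ℝ) : |arctan x| ≤ π / 2 :=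
  abs_le.2 ⟨(neg_pi_div_two_lt_arctan x).le, (arctan_lt_pi_div_two x).le⟩

namespace MeasureTheory.AEEqFun

variable {Ω : Type*} [MeasurableSpace Ω] {μ : Measure Ω}

theorem exists_isLUB_tendsto_of_monotone {H : ℕ → Ω →ₘ[μ] ℝ} (hH : Monotone H)
    (hbdd : BddAbove (range H)) :
    ∃ s : Ω →ₘ[μ] ℝ, IsLUB (range H) s ∧ ∀ᵐ ω ∂μ, Tendsto (fun n => H n ω) atTop (𝓝 (s ω)) := by
  obtain ⟨g, hg⟩ := hbdd
  have hmono : ∀ᵐ ω ∂μ, Monotone fun n => H n ω := by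
    filter_upwards [ae_all_iff.2 fun n => coeFn_le.2 (hH (Nat.le_succ n))] with ω hω
    exact monotone_nat_of_le_succ hω
  have hle : ∀ᵐ ω ∂μ, ∀ n, H n ω ≤ g ω := ae_all_iff.2 fun n => coeFn_le.2 (hg ⟨n, rfl⟩)
  set s := mk (fun ω => ⨆ n, H n ω)
    (AEMeasurable.iSup fun n => (H n).aemeasurable).aestronglyMeasurable
  have hs : ∀ᵐ ω ∂μ, s ω = ⨆ n, H n ω := coeFn_mk _ _
  refine ⟨s, ⟨?_, fun t ht => ?_⟩, ?_⟩
  · rintro _ ⟨n, rfl⟩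
    refine coeFn_le.1 ?_
    filter_upwards [hs, hle] with ω hsω hleω
    exact hsω ▸ le_ciSup ⟨g ω, forall_mem_range.2 hleω⟩ n
  · refine coeFn_le.1 ?_
    filter_upwards [hs, ae_all_iff.2 fun n => coeFn_le.2 (ht ⟨n, rfl⟩)] with ω hsω htω
    exact hsω ▸ ciSup_le htω
  · filter_upwards [hs, hmono, hle] with ω hsω hmonoω hleω
    exact hsω ▸ tendsto_atTop_ciSup hmonoω ⟨g ω, forall_mem_range.2 hleω⟩

variable (μ) [SFinite μ]

noncomputable def arctanIntegral (f : Ω →ₘ[μ] ℝ) : ℝ := ∫ ω, arctan (f ω) ∂μ.toFinite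

variable {μ}

theorem integrable_arctan_toFinite (f : Ω →ₘ[μ] ℝ) :
    MeasureTheory.Integrable (fun ω => arctan (f ω)) μ.toFinite :=
  .of_bound (continuous_arctan.comp_aestronglyMeasurable
      (f.aestronglyMeasurable.mono_ac (toFinite_absolutelyContinuous μ))) (π / 2)
    (.of_forall fun _ => abs_arctan_le _)

theorem arctanIntegral_strictMono : StrictMono (arctanIntegral μ) := by
  intro f g hfg
  have hle : (fun ω => arctan (f ω)) ≤ᵐ[μ.toFinite] fun ω => arctan (g ω) := by
    rw [EventuallyLE, ae_toFinite]
    filter_upwards [coeFn_le.2 hfg.le] with ω hω using arctan_strictMono.monotone hω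
  refine (integral_mono_ae (integrable_arctan_toFinite f) (integrable_arctan_toFinite g)
    hle).lt_of_ne fun heq => hfg.ne ?_
  have h := (integral_eq_iff_of_ae_le (integrable_arctan_toFinite f)
    (integrable_arctan_toFinite g) hle).1 heq
  rw [EventuallyEq, ae_toFinite] at h
  exact ext (h.mono fun ω hω => arctan_injective hω)

theorem tendsto_arctanIntegral {H : ℕ → Ω →ₘ[μ] ℝ} {s : Ω →ₘ[μ] ℝ}
    (h : ∀ᵐ ω ∂μ, Tendsto (fun n => H n ω) atTop (𝓝 (s ω))) :
    Tendsto (fun n => arctanIntegral μ (H n)) atTop (𝓝 (arctanIntegral μ s)) := by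
  refine tendsto_integral_of_dominated_convergence (fun _ => π / 2)
    (fun n => (integrable_arctan_toFinite (H n)).aestronglyMeasurable) (integrable_const _)
    (fun _ => .of_forall fun _ => abs_arctan_le _) ?_
  rw [ae_toFinite]
  filter_upwards [h] with ω hω using (continuous_arctan.tendsto _).comp hω

end MeasureTheory.AEEqFun

/-- Dedekind completeness of `L⁰(μ)`: every nonempty subset that is bounded above in the
a.e. pointwise order has a least upper bound (essential supremum). -/
theorem L0_essSup_exists {Ω : Type*} [MeasurableSpace Ω] {μ : Measure Ω} [SigmaFinite μ]
    (S : Set (Ω →ₘ[μ] ℝ)) (hne : S.Nonempty)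
    (hbdd : ∃ g : Ω →ₘ[μ] ℝ, ∀ f ∈ S, ∀ᵐ ω ∂μ, f ω ≤ g ω) :
    ∃ s : Ω →ₘ[μ] ℝ, (∀ f ∈ S, ∀ᵐ ω ∂μ, f ω ≤ s ω) ∧
      ∀ t : Ω →ₘ[μ] ℝ, (∀ f ∈ S, ∀ᵐ ω ∂μ, f ω ≤ t ω) → ∀ᵐ ω ∂μ, s ω ≤ t ω := by
  obtain ⟨g, hg⟩ := hbdd
  obtain ⟨s, hs⟩ := exists_isLUB_of_strictMono_of_tendsto AEEqFun.arctanIntegral_strictMono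
    (fun H hH hHbdd => (AEEqFun.exists_isLUB_tendsto_of_monotone hH hHbdd).imp
      fun _ ⟨hlub, hlim⟩ => ⟨hlub, AEEqFun.tendsto_arctanIntegral hlim⟩)
    hne ⟨g, fun f hf => AEEqFun.coeFn_le.1 (hg f hf)⟩
  exact ⟨s, fun f hf => AEEqFun.coeFn_le.2 (hs.1 hf),
    fun t ht => AEEqFun.coeFn_le.2 (hs.2 fun f hf => AEEqFun.coeFn_le.1 (ht f hf))⟩
end
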